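/- (Restricted biorthogonality is preserved under oblique projection.) Let Ψ, Ψ̃ ∈ K^{m×n}, let Ĵ ⊆ {1,…,n} with |Ĵ| = r, and let s ≥ 1 be such that θ_{s+r}(Ψ̃*Ψ) < 1. Then Ψ̃_Ĵ*Ψ_Ĵ is invertible and, setting E = I_m − Ψ_Ĵ(Ψ̃_Ĵ*Ψ_Ĵ)^{-1}Ψ̃_Ĵ* (with E = I_m when Ĵ = ∅), the (n−r)×(n−r) matrix Ψ̃_{[n]\Ĵ}* E Ψ_{[n]\Ĵ} satisfies θ_s(Ψ̃_{[n]\Ĵ}* E Ψ_{[n]\Ĵ}) ≤ θ_{s+r}(Ψ̃*Ψ). -/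

import Mathlib

/-!
Write `M = Ψ̃*Ψ`, `θ = θ_{s+r}(M)` and `J = Ĵ`. The matrix `Ψ̃_{Jᶜ}* E Ψ_{Jᶜ}` is the Schur
complement `S = M_{JᶜJᶜ} - M_{JᶜJ} M_{JJ}⁻¹ M_{JJᶜ}`, and `M_{JJ}` is invertible because a kernel
vector `u` would give `‖u‖² = |⟨u, Mu⟩ - ⟨u, u⟩| ≤ θ ‖u‖²`.

Given `x, y` supported off `J` on a common set of size `≤ s`, put `w = M_{JJ}⁻¹ M_{JJᶜ} x` and
`x̂ = x - w` (with `w` extended by zero). Then `v = (M - I) x̂` equals `S x - x` off `J` and `w` on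
`J`, so `a = ⟨y, S x⟩ - ⟨y, x⟩ = ⟨y, v⟩` and `⟨w, v⟩ = ‖w‖²`. Testing `v` against
`z = a y + ‖y‖² w`, which is supported on a set of size `≤ s + r`, gives
`|a|² + ‖y‖²‖w‖² ≤ θ ‖x̂‖ ‖z‖` with `‖x̂‖² = ‖x‖² + ‖w‖²` and `‖z‖² = ‖y‖² (|a|² + ‖y‖²‖w‖²)`.
Hence `|a|² ≤ θ² ‖x‖²‖y‖² - (1 - θ²) ‖y‖²‖w‖² ≤ θ² ‖x‖²‖y‖²`.
-/

open scoped BigOperators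
open Matrix MeasureTheory

noncomputable section

namespace ObliquePursuit

variable {𝕜 : Type*} [RCLike 𝕜]

/-- The Euclidean (`ℓ²`) norm of a finitely indexed vector. -/
def l2 {ι : Type*} [Fintype ι] (x : ι → 𝕜) : ℝ :=
  Real.sqrt (∑ i, ‖x i‖ ^ 2)

/-- The spectral (`ℓ² → ℓ²` operator) norm of a matrix. -/
def specNorm {ι κ : Type*} [Fintype ι] [Fintype κ] [DecidableEq κ]
    (M : Matrix ι κ 𝕜) : ℝ :=
  ‖LinearMap.toContinuousLinearMap (Matrix.toEuclideanLin M)‖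

/-- `x` is `s`-sparse: it has at most `s` nonzero entries. -/
def Sparse {ι : Type*} (s : ℕ) (x : ι → 𝕜) : Prop :=
  ∃ J : Finset ι, J.card ≤ s ∧ ∀ i, x i ≠ 0 → i ∈ J

/-- The `s`-restricted biorthogonality constant `θ_s(M)`: the smallest `δ ≥ 0` such that
`|⟨y, Mx⟩ − ⟨y, x⟩| ≤ δ‖x‖₂‖y‖₂` for all `x, y` supported on a common index set of
cardinality at most `s`. -/
def theta {ι : Type*} [Fintype ι] (s : ℕ) (M : Matrix ι ι 𝕜) : ℝ :=
  sInf {δ : ℝ | 0 ≤ δ ∧ ∀ J : Finset ι, J.card ≤ s →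
    ∀ x y : ι → 𝕜, (∀ i, x i ≠ 0 → i ∈ J) → (∀ i, y i ≠ 0 → i ∈ J) →
      ‖star y ⬝ᵥ M.mulVec x - star y ⬝ᵥ x‖ ≤ δ * l2 x * l2 y}

/-- The `s`-restricted isometry constant `δ_s(Ψ)`. -/
def ric {ι κ : Type*} [Fintype ι] [Fintype κ] (s : ℕ) (Ψ : Matrix ι κ 𝕜) : ℝ :=
  sInf {δ : ℝ | 0 ≤ δ ∧ ∀ x : κ → 𝕜, Sparse s x →
    (1 - δ) * l2 x ^ 2 ≤ l2 (Ψ.mulVec x) ^ 2 ∧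
      l2 (Ψ.mulVec x) ^ 2 ≤ (1 + δ) * l2 x ^ 2}

/-- Coordinate projection `Π_J`: keep the entries indexed by `J`, zero out the others. -/
def proj {ι : Type*} [DecidableEq ι] (J : Finset ι) (x : ι → 𝕜) : ι → 𝕜 :=
  fun i => if i ∈ J then x i else 0

/-- The column submatrix `Ψ_J` of `Ψ` formed by the columns indexed by `J`. -/
def cols {ι κ : Type*} (Ψ : Matrix ι κ 𝕜) (J : Finset κ) :
    Matrix ι {j // j ∈ J} 𝕜 :=
  Ψ.submatrix id fun j => (j : κ)

/-- The `j`-th column of `Ψ`. -/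
def col {ι κ : Type*} (Ψ : Matrix ι κ 𝕜) (j : κ) : ι → 𝕜 :=
  fun i => Ψ i j

/-- The complementary oblique projector `E = I − Ψ_J (Ψ̃_J^* Ψ_J)⁻¹ Ψ̃_J^*`
(equal to `I` when `J = ∅`). -/
def obliqueE {ι κ : Type*} [Fintype ι] [DecidableEq ι] [DecidableEq κ]
    (Ψ Ψt : Matrix ι κ 𝕜) (J : Finset κ) : Matrix ι ι 𝕜 :=
  1 - cols Ψ J * ((cols Ψt J)ᴴ * cols Ψ J)⁻¹ * (cols Ψt J)ᴴ

/-- The smallest (real) eigenvalue of a matrix. -/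
def lamMin {ι : Type*} [Fintype ι] (G : Matrix ι ι 𝕜) : ℝ :=
  sInf {r : ℝ | ∃ v : ι → 𝕜, v ≠ 0 ∧ G.mulVec v = (r : 𝕜) • v}

/-- The `j`-th largest singular value (1-indexed) of a matrix, characterized via the
Eckart–Young–Mirsky theorem: `σ_j(A) = min { ‖A − B‖ : rank B < j }` where `‖·‖` is the
spectral norm. -/
def singVal {ι κ : Type*} [Fintype ι] [Fintype κ] [DecidableEq κ]
    (A : Matrix ι κ 𝕜) (j : ℕ) : ℝ :=
  sInf {r : ℝ | ∃ B : Matrix ι κ 𝕜, B.rank < j ∧ r = specNorm (A - B)}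

lemma le_mul_mul_of_sq_add_le {θ X Y W A : ℝ} (hθ0 : 0 ≤ θ) (hθ1 : θ ≤ 1) (hX : 0 ≤ X)
    (hY : 0 ≤ Y) (hA : 0 ≤ A)
    (h : A ^ 2 + Y ^ 2 * W ^ 2 ≤ θ * √(X ^ 2 + W ^ 2) * (Y * √(A ^ 2 + Y ^ 2 * W ^ 2))) :
    A ≤ θ * X * Y := by
  set S := √(A ^ 2 + Y ^ 2 * W ^ 2)
  have hS : S ^ 2 = A ^ 2 + Y ^ 2 * W ^ 2 := Real.sq_sqrt (by positivity)
  rcases (Real.sqrt_nonneg (A ^ 2 + Y ^ 2 * W ^ 2)).eq_or_lt with hS0 | hS0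
  · have hA0 : A = 0 := by nlinarith
    rw [hA0]; positivity
  · have h1 : S ≤ θ * Y * √(X ^ 2 + W ^ 2) := by
      rw [← hS, sq] at h
      nlinarith
    have h2 := pow_le_pow_left₀ hS0.le h1 2
    rw [hS, mul_pow, mul_pow, Real.sq_sqrt (by positivity)] at h2
    have hθ2 : θ ^ 2 * (Y ^ 2 * W ^ 2) ≤ Y ^ 2 * W ^ 2 :=
      mul_le_of_le_one_left (by positivity) (pow_le_one₀ hθ0 hθ1)
    have h3 : A ^ 2 ≤ (θ * X * Y) ^ 2 := by nlinarith
    exact (pow_le_pow_iff_left₀ hA (by positivity) two_ne_zero).1 h3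

section L2

open WithLp

variable {ι : Type*} [Fintype ι]

lemma l2_eq_norm (x : ι → 𝕜) : l2 x = ‖(toLp 2 x : EuclideanSpace 𝕜 ι)‖ := by
  rw [EuclideanSpace.norm_eq]; rfl

lemma star_dotProduct_eq_inner (y x : ι → 𝕜) :
    star y ⬝ᵥ x = inner 𝕜 (toLp 2 y : EuclideanSpace 𝕜 ι) (toLp 2 x) := by
  rw [EuclideanSpace.inner_toLp_toLp, dotProduct_comm]

lemma l2_nonneg (x : ι → 𝕜) : 0 ≤ l2 x := Real.sqrt_nonneg _

lemma l2_eq_zero {x : ι → 𝕜} : l2 x = 0 ↔ x = 0 := by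
  rw [l2_eq_norm, norm_eq_zero, WithLp.toLp_eq_zero]

lemma l2_smul (c : 𝕜) (x : ι → 𝕜) : l2 (c • x) = ‖c‖ * l2 x := by
  simp only [l2_eq_norm, WithLp.toLp_smul, norm_smul]

lemma l2_add_sq {x y : ι → 𝕜} (h : star x ⬝ᵥ y = 0) : l2 (x + y) ^ 2 = l2 x ^ 2 + l2 y ^ 2 := by
  rw [star_dotProduct_eq_inner] at h
  simp only [l2_eq_norm, WithLp.toLp_add, sq]
  exact norm_add_sq_eq_norm_sq_add_norm_sq_of_inner_eq_zero _ _ h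

lemma l2_sub_sq {x y : ι → 𝕜} (h : star x ⬝ᵥ y = 0) : l2 (x - y) ^ 2 = l2 x ^ 2 + l2 y ^ 2 := by
  rw [star_dotProduct_eq_inner] at h
  simp only [l2_eq_norm, WithLp.toLp_sub, @norm_sub_sq 𝕜, h, map_zero, mul_zero, sub_zero]

lemma norm_star_dotProduct_le (y x : ι → 𝕜) : ‖star y ⬝ᵥ x‖ ≤ l2 y * l2 x := by
  rw [star_dotProduct_eq_inner, l2_eq_norm, l2_eq_norm]
  exact norm_inner_le_norm _ _

lemma star_dotProduct_self (x : ι → 𝕜) : star x ⬝ᵥ x = ((l2 x ^ 2 : ℝ) : 𝕜) := by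
  rw [star_dotProduct_eq_inner, inner_self_eq_norm_sq_to_K, l2_eq_norm]; push_cast; rfl

lemma l2_mulVec_le {κ : Type*} [Fintype κ] [DecidableEq κ] (A : Matrix ι κ 𝕜) (x : κ → 𝕜) :
    l2 (A *ᵥ x) ≤ specNorm A * l2 x := by
  rw [l2_eq_norm, l2_eq_norm]
  exact (LinearMap.toContinuousLinearMap (Matrix.toEuclideanLin A)).le_opNorm (toLp 2 x)

end L2

section Theta

variable {ι : Type*} [Fintype ι]

lemma theta_set_nonempty (s : ℕ) (M : Matrix ι ι 𝕜) : {δ : ℝ | 0 ≤ δ ∧ ∀ J : Finset ι,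
    J.card ≤ s → ∀ x y : ι → 𝕜, (∀ i, x i ≠ 0 → i ∈ J) → (∀ i, y i ≠ 0 → i ∈ J) →
      ‖star y ⬝ᵥ M *ᵥ x - star y ⬝ᵥ x‖ ≤ δ * l2 x * l2 y}.Nonempty := by
  classical
  refine ⟨specNorm (M - 1), norm_nonneg _, fun _ _ x y _ _ => ?_⟩
  rw [← dotProduct_sub, show M *ᵥ x - x = (M - 1) *ᵥ x by rw [Matrix.sub_mulVec, Matrix.one_mulVec]]
  calc ‖star y ⬝ᵥ (M - 1) *ᵥ x‖ ≤ l2 y * l2 ((M - 1) *ᵥ x) := norm_star_dotProduct_le _ _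
    _ ≤ l2 y * (specNorm (M - 1) * l2 x) :=
        mul_le_mul_of_nonneg_left (l2_mulVec_le _ _) (l2_nonneg y)
    _ = specNorm (M - 1) * l2 x * l2 y := by ring

lemma theta_nonneg (s : ℕ) (M : Matrix ι ι 𝕜) : 0 ≤ theta s M :=
  le_csInf (theta_set_nonempty s M) fun _ hδ => hδ.1

lemma norm_sub_le_theta {s : ℕ} (M : Matrix ι ι 𝕜) {J : Finset ι} (hJ : J.card ≤ s)
    {x y : ι → 𝕜} (hx : ∀ i, x i ≠ 0 → i ∈ J) (hy : ∀ i, y i ≠ 0 → i ∈ J) :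
    ‖star y ⬝ᵥ M *ᵥ x - star y ⬝ᵥ x‖ ≤ theta s M * l2 x * l2 y := by
  rcases (mul_nonneg (l2_nonneg x) (l2_nonneg y)).eq_or_lt with hxy | hxy
  · obtain ⟨δ, -, hδ⟩ := theta_set_nonempty s M
    simpa only [mul_assoc, ← hxy, mul_zero] using hδ J hJ x y hx hy
  · rw [mul_assoc, ← div_le_iff₀ hxy]
    refine le_csInf (theta_set_nonempty s M) fun δ hδ => ?_
    rw [div_le_iff₀ hxy, ← mul_assoc]
    exact hδ.2 J hJ x y hx hy

lemma theta_le_of_forall {s : ℕ} {M : Matrix ι ι 𝕜} {δ : ℝ} (hδ : 0 ≤ δ)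
    (h : ∀ J : Finset ι, J.card ≤ s → ∀ x y : ι → 𝕜, (∀ i, x i ≠ 0 → i ∈ J) →
      (∀ i, y i ≠ 0 → i ∈ J) → ‖star y ⬝ᵥ M *ᵥ x - star y ⬝ᵥ x‖ ≤ δ * l2 x * l2 y) :
    theta s M ≤ δ :=
  csInf_le ⟨0, fun _ hδ => hδ.1⟩ ⟨hδ, h⟩

lemma norm_star_dotProduct_le_theta_of_correction {M : Matrix ι ι 𝕜} {k : ℕ}
    (hθ : theta k M ≤ 1) {K : Finset ι} (hK : K.card ≤ k) {x y e : ι → 𝕜}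
    (hx : Function.support x ⊆ K) (hy : Function.support y ⊆ K) (he : Function.support e ⊆ K)
    (hxe : star x ⬝ᵥ e = 0) (hye : star y ⬝ᵥ e = 0)
    (hev : star e ⬝ᵥ (M *ᵥ (x - e) - (x - e)) = ((l2 e ^ 2 : ℝ) : 𝕜)) :
    ‖star y ⬝ᵥ (M *ᵥ (x - e) - (x - e))‖ ≤ theta k M * l2 x * l2 y := by
  set v := M *ᵥ (x - e) - (x - e)
  set a := star y ⬝ᵥ v
  -- the extremal test vector: `⟨z, v⟩ = ‖z‖² / ‖y‖²` is real
  set z := a • y + ((l2 y ^ 2 : ℝ) : 𝕜) • e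
  have hzv : star z ⬝ᵥ v = ((‖a‖ ^ 2 + l2 y ^ 2 * l2 e ^ 2 : ℝ) : 𝕜) := by
    simp only [z, star_add, star_smul, add_dotProduct, smul_dotProduct, hev, smul_eq_mul]
    rw [RCLike.star_def, RCLike.conj_mul, RCLike.conj_ofReal]
    push_cast
    ring
  have hz : l2 z = l2 y * √(‖a‖ ^ 2 + l2 y ^ 2 * l2 e ^ 2) := by
    have hzy : star (a • y) ⬝ᵥ ((l2 y ^ 2 : ℝ) : 𝕜) • e = 0 := by
      simp only [star_smul, smul_dotProduct, dotProduct_smul, hye, smul_zero]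
    refine (pow_left_inj₀ (l2_nonneg _)
      (mul_nonneg (l2_nonneg _) (Real.sqrt_nonneg _)) two_ne_zero).1 ?_
    rw [l2_add_sq hzy, l2_smul, l2_smul, RCLike.norm_ofReal, abs_of_nonneg (sq_nonneg _),
      mul_pow (l2 y), Real.sq_sqrt (by positivity)]
    ring
  have hxe' : l2 (x - e) = √(l2 x ^ 2 + l2 e ^ 2) := by
    rw [← Real.sqrt_sq (l2_nonneg (x - e)), l2_sub_sq hxe]
  have hzK : Function.support z ⊆ K := (Function.support_add _ _).trans <| Set.union_subset
    ((Function.support_smul_subset_right _ _).trans hy)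
    ((Function.support_smul_subset_right _ _).trans he)
  have hxeK : Function.support (x - e) ⊆ K :=
    (Function.support_sub _ _).trans (Set.union_subset hx he)
  have key := norm_sub_le_theta M hK hxeK hzK
  rw [← dotProduct_sub, hzv, hxe', hz, RCLike.norm_ofReal, abs_of_nonneg (by positivity)] at key
  exact le_mul_mul_of_sq_add_le (theta_nonneg _ _) hθ (l2_nonneg x) (l2_nonneg y)
    (norm_nonneg a) key

end Theta

section ExtendZero

variable {ι : Type*} [DecidableEq ι] {K : Finset ι}

def extendZero (K : Finset ι) (z : K → 𝕜) : ι → 𝕜 :=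
  fun i => if h : i ∈ K then z ⟨i, h⟩ else 0

@[simp]
lemma extendZero_coe (z : K → 𝕜) (k : K) : extendZero K z k = z k := dif_pos k.2

lemma extendZero_of_notMem (z : K → 𝕜) {i : ι} (h : i ∉ K) : extendZero K z i = 0 := dif_neg h

lemma support_extendZero_subset (z : K → 𝕜) : Function.support (extendZero K z) ⊆ K :=
  fun _ hi => by_contra fun h => hi (extendZero_of_notMem z h)

lemma support_extendZero_subset_map {z : K → 𝕜} {L : Finset K}
    (hz : Function.support z ⊆ L) :
    Function.support (extendZero K z) ⊆ L.map (Function.Embedding.subtype _) := by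
  intro i hi
  obtain ⟨k, rfl⟩ : ∃ k : K, ↑k = i := ⟨⟨i, support_extendZero_subset z hi⟩, rfl⟩
  rw [Function.mem_support, extendZero_coe] at hi
  exact Finset.mem_map_of_mem _ (hz hi)

lemma extendZero_dotProduct [Fintype ι] (z : K → 𝕜) (u : ι → 𝕜) :
    extendZero K z ⬝ᵥ u = z ⬝ᵥ fun k : K => u k := by
  rw [dotProduct, ← Finset.sum_subset K.subset_univ fun i _ hi => by
    rw [extendZero_of_notMem z hi, zero_mul], ← Finset.sum_coe_sort K]
  simp only [extendZero_coe, dotProduct]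

lemma star_extendZero (z : K → 𝕜) : star (extendZero K z) = extendZero K (star z) := by
  ext i
  by_cases h : i ∈ K <;> simp [extendZero, h]

lemma star_extendZero_dotProduct [Fintype ι] (z : K → 𝕜) (u : ι → 𝕜) :
    star (extendZero K z) ⬝ᵥ u = star z ⬝ᵥ fun k : K => u k := by
  rw [star_extendZero, extendZero_dotProduct]

lemma star_extendZero_dotProduct_extendZero [Fintype ι] {L : Finset ι} (hKL : Disjoint K L)
    (z : K → 𝕜) (u : L → 𝕜) : star (extendZero K z) ⬝ᵥ extendZero L u = 0 := by
  have hu : (fun k : K => extendZero L u k) = 0 :=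
    funext fun k => extendZero_of_notMem u (Finset.disjoint_left.1 hKL k.2)
  rw [star_extendZero_dotProduct, hu, dotProduct_zero]

lemma l2_extendZero [Fintype ι] (z : K → 𝕜) : l2 (extendZero K z) = l2 z := by
  have h := star_extendZero_dotProduct z (extendZero K z)
  simp only [extendZero_coe, star_dotProduct_self] at h
  exact (pow_left_inj₀ (l2_nonneg _) (l2_nonneg _) two_ne_zero).1 (RCLike.ofReal_injective h)

lemma toBlock_mulVec [Fintype ι] {κ : Type*} (M : Matrix κ ι 𝕜) (I : Finset κ) (z : K → 𝕜) :
    M.toBlock (· ∈ I) (· ∈ K) *ᵥ z = fun i : I => (M *ᵥ extendZero K z) i := by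
  ext i
  change _ = (fun j => M i j) ⬝ᵥ extendZero K z
  rw [dotProduct_comm, extendZero_dotProduct, dotProduct_comm]
  rfl

lemma mulVec_extendZero_sub_extendZero [Fintype ι] (M : Matrix ι ι 𝕜) (I : Finset ι) {L : Finset ι}
    (x : K → 𝕜) (w : L → 𝕜) :
    (fun i : I => (M *ᵥ (extendZero K x - extendZero L w)) i) =
      M.toBlock (· ∈ I) (· ∈ K) *ᵥ x - M.toBlock (· ∈ I) (· ∈ L) *ᵥ w := by
  rw [toBlock_mulVec, toBlock_mulVec, mulVec_sub]
  rfl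

end ExtendZero

section Schur

variable {ι : Type*} [Fintype ι] [DecidableEq ι]

def schurCompl (M : Matrix ι ι 𝕜) (J : Finset ι) : Matrix {i // i ∈ Jᶜ} {i // i ∈ Jᶜ} 𝕜 :=
  M.toBlock (· ∈ Jᶜ) (· ∈ Jᶜ) -
    M.toBlock (· ∈ Jᶜ) (· ∈ J) * (M.toBlock (· ∈ J) (· ∈ J))⁻¹ * M.toBlock (· ∈ J) (· ∈ Jᶜ)

lemma isUnit_det_toBlock_of_theta_lt_one {M : Matrix ι ι 𝕜} {J : Finset ι} {k : ℕ}
    (hJ : J.card ≤ k) (hθ : theta k M < 1) : IsUnit (M.toBlock (· ∈ J) (· ∈ J)).det := by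
  rw [isUnit_iff_ne_zero]
  intro hdet
  obtain ⟨u, hu0, hu⟩ := Matrix.exists_mulVec_eq_zero_iff.2 hdet
  have hquad : star (extendZero J u) ⬝ᵥ M *ᵥ extendZero J u = 0 := by
    rw [star_extendZero_dotProduct, ← toBlock_mulVec, hu, dotProduct_zero]
  have h := norm_sub_le_theta M hJ (support_extendZero_subset u) (support_extendZero_subset u)
  rw [hquad, zero_sub, norm_neg, star_dotProduct_self, RCLike.norm_ofReal,
    abs_of_nonneg (sq_nonneg _), mul_assoc, ← sq, l2_extendZero] at h
  have hl2 : l2 u ^ 2 = 0 := by nlinarith [theta_nonneg k M, sq_nonneg (l2 u)]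
  exact hu0 (l2_eq_zero.1 (pow_eq_zero_iff two_ne_zero |>.1 hl2))

theorem theta_schurCompl_le {M : Matrix ι ι 𝕜} {J : Finset ι} {s : ℕ}
    (hθ : theta (s + J.card) M < 1) : theta s (schurCompl M J) ≤ theta (s + J.card) M := by
  have hA := isUnit_det_toBlock_of_theta_lt_one (Nat.le_add_left _ _) hθ
  refine theta_le_of_forall (theta_nonneg _ _) fun L hL x y hx hy => ?_
  set w := (M.toBlock (· ∈ J) (· ∈ J))⁻¹ *ᵥ (M.toBlock (· ∈ J) (· ∈ Jᶜ) *ᵥ x)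
  set x' := extendZero Jᶜ x
  set y' := extendZero Jᶜ y
  set e := extendZero J w
  set v := M *ᵥ (x' - e) - (x' - e)
  have hMJ : (fun j : J => (M *ᵥ (x' - e)) j) = 0 := by
    rw [mulVec_extendZero_sub_extendZero, mulVec_mulVec, mul_nonsing_inv _ hA, one_mulVec,
      sub_self]
  have hMc : (fun i : {i // i ∈ Jᶜ} => (M *ᵥ (x' - e)) i) = schurCompl M J *ᵥ x := by
    rw [mulVec_extendZero_sub_extendZero, schurCompl, sub_mulVec, ← mulVec_mulVec,
      ← mulVec_mulVec]
  have hvJ : (fun j : J => v j) = w := by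
    funext j
    have hx'j : x' j = 0 := extendZero_of_notMem x (by simp)
    simp [v, congrFun hMJ j, hx'j, e]
  have hvc : (fun i : {i // i ∈ Jᶜ} => v i) = schurCompl M J *ᵥ x - x := by
    funext i
    have hei : e i = 0 := extendZero_of_notMem w (Finset.mem_compl.1 i.2)
    simp [v, ← congrFun hMc i, hei, x']
  have hy'e : star y' ⬝ᵥ e = 0 := star_extendZero_dotProduct_extendZero disjoint_compl_left _ _
  have hx'e : star x' ⬝ᵥ e = 0 := star_extendZero_dotProduct_extendZero disjoint_compl_left _ _
  have hev : star e ⬝ᵥ v = ((l2 e ^ 2 : ℝ) : 𝕜) := by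
    rw [star_extendZero_dotProduct, hvJ, star_dotProduct_self, l2_extendZero]
  set K := J ∪ L.map (Function.Embedding.subtype _)
  have hK : K.card ≤ s + J.card :=
    (Finset.card_union_le _ _).trans (by rw [Finset.card_map]; omega)
  have hx'K : Function.support x' ⊆ K := (support_extendZero_subset_map hx).trans
    (Finset.coe_subset.2 Finset.subset_union_right)
  have hy'K : Function.support y' ⊆ K := (support_extendZero_subset_map hy).trans
    (Finset.coe_subset.2 Finset.subset_union_right)
  have heK : Function.support e ⊆ K := (support_extendZero_subset w).trans
    (Finset.coe_subset.2 Finset.subset_union_left)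
  have key := norm_star_dotProduct_le_theta_of_correction hθ.le hK hx'K hy'K heK hx'e hy'e hev
  rwa [star_extendZero_dotProduct, hvc, dotProduct_sub, l2_extendZero, l2_extendZero] at key

end Schur

lemma conjTranspose_cols_mul_cols {ι κ : Type*} [Fintype ι] (Ψ Ψt : Matrix ι κ 𝕜) (I K : Finset κ) :
    (cols Ψt I)ᴴ * cols Ψ K = (Ψtᴴ * Ψ).toBlock (· ∈ I) (· ∈ K) :=
  rfl

lemma conjTranspose_cols_mul_obliqueE_mul_cols {ι κ : Type*} [Fintype ι] [DecidableEq ι]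
    [Fintype κ] [DecidableEq κ] (Ψ Ψt : Matrix ι κ 𝕜) (J : Finset κ) :
    (cols Ψt Jᶜ)ᴴ * obliqueE Ψ Ψt J * cols Ψ Jᶜ = schurCompl (Ψtᴴ * Ψ) J := by
  rw [schurCompl, ← conjTranspose_cols_mul_cols Ψ Ψt Jᶜ Jᶜ,
    ← conjTranspose_cols_mul_cols Ψ Ψt Jᶜ J, ← conjTranspose_cols_mul_cols Ψ Ψt J J,
    ← conjTranspose_cols_mul_cols Ψ Ψt J Jᶜ, obliqueE]
  simp only [Matrix.mul_sub, Matrix.sub_mul, Matrix.mul_one, Matrix.mul_assoc]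

theorem statement4_general (m n s r : ℕ) (Ψ Ψt : Matrix (Fin m) (Fin n) 𝕜)
    (Jhat : Finset (Fin n)) (hr : Jhat.card = r)
    (hθ : theta (s + r) (Ψtᴴ * Ψ) < 1) :
    IsUnit ((cols Ψt Jhat)ᴴ * cols Ψ Jhat).det ∧
      theta s ((cols Ψt Jhatᶜ)ᴴ * obliqueE Ψ Ψt Jhat * cols Ψ Jhatᶜ) ≤
        theta (s + r) (Ψtᴴ * Ψ) := by
  subst hr
  rw [conjTranspose_cols_mul_cols, conjTranspose_cols_mul_obliqueE_mul_cols]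
  exact ⟨isUnit_det_toBlock_of_theta_lt_one (Nat.le_add_left _ _) hθ, theta_schurCompl_le hθ⟩

/-- the restricted biorthogonality constant is preserved under oblique
projection. -/
theorem statement4 (m n s r : ℕ) (hs : 1 ≤ s) (Ψ Ψt : Matrix (Fin m) (Fin n) 𝕜)
    (Jhat : Finset (Fin n)) (hr : Jhat.card = r)
    (hθ : theta (s + r) (Ψtᴴ * Ψ) < 1) :
    IsUnit ((cols Ψt Jhat)ᴴ * cols Ψ Jhat).det ∧
      theta s ((cols Ψt Jhatᶜ)ᴴ * obliqueE Ψ Ψt Jhat * cols Ψ Jhatᶜ) ≤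
        theta (s + r) (Ψtᴴ * Ψ) :=
  statement4_general m n s r Ψ Ψt Jhat hr hθ
end ObliquePursuit
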